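/- arXiv:1912.11559 — 3 statements merged into one kernel-verified Lean document; each statement's English description precedes it below -/
import Mathlib

section
/- As m → 0⁺ (with ε, γ, ω > 0 fixed), the quantity S_upper(m) = (ε²/(2m²ω⁴)) ∑_{n=0}^∞ 1/(n² + γ²/(4m²ω²))² satisfies S_upper(m) = (mπε²)/(γ³ω) + O(m²); that is, there exist constants C, m₀ > 0 such that |S_upper(m) − mπε²/(γ³ω)| ≤ C m² for all 0 < m < m₀. -/
/-!
With `a = γ / (2 m ω)` the sum is `∑ₙ f(n)` for the decreasing function
`f x = 1 / (x² + a²)²`, so the integral test squeezes it between `∫₀^∞ f = π / (4 a³)` and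
`f 0 + ∫₀^∞ f`. The prefactor `ε² / (2 m² ω⁴)` turns the integral into the leading term
`m π ε² / (γ³ ω)` and the boundary term `f 0 = a⁻⁴` into `8 ε² m² / γ⁴`.
-/

open Set MeasureTheory Filter Real Topology

theorem hasDerivAt_primitive_one_div_sq_add_sq_sq {a : ℝ} (ha : a ≠ 0) (x : ℝ) :
    HasDerivAt (fun x : ℝ => x / (2 * a ^ 2 * (x ^ 2 + a ^ 2)) + arctan (x / a) / (2 * a ^ 3))
      (1 / (x ^ 2 + a ^ 2) ^ 2) x := by
  have hden : 2 * a ^ 2 * (x ^ 2 + a ^ 2) ≠ 0 := by positivity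
  have hrat := (hasDerivAt_id x).div
    (((hasDerivAt_pow 2 x).add_const (a ^ 2)).const_mul (2 * a ^ 2)) hden
  have harctan := (((hasDerivAt_arctan (x / a)).comp x
    ((hasDerivAt_id x).div_const a)).div_const (2 * a ^ 3))
  refine (hrat.add harctan).congr_deriv ?_
  have : 1 + (x / a) ^ 2 ≠ 0 := by positivity
  simp only [id]
  field_simp
  ring

theorem tendsto_primitive_one_div_sq_add_sq_sq {a : ℝ} (ha : 0 < a) :
    Tendsto (fun x : ℝ => x / (2 * a ^ 2 * (x ^ 2 + a ^ 2)) + arctan (x / a) / (2 * a ^ 3))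
      atTop (𝓝 (π / (4 * a ^ 3))) := by
  have hrat : Tendsto (fun x : ℝ => x / (2 * a ^ 2 * (x ^ 2 + a ^ 2))) atTop (𝓝 0) := by
    have hden : Tendsto (fun x : ℝ => 2 * a ^ 2 * (x ^ 2 + a ^ 2) / x) atTop atTop := by
      refine tendsto_atTop_mono' atTop ?_
        (tendsto_id.const_mul_atTop (by positivity : 0 < 2 * a ^ 2))
      filter_upwards [eventually_gt_atTop 0] with x hx
      rw [id, le_div_iff₀ hx]
      nlinarith [sq_nonneg a]
    refine hden.inv_tendsto_atTop.congr fun x => ?_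
    simp only [Pi.inv_apply, inv_div]
  have harctan : Tendsto (fun x : ℝ => arctan (x / a) / (2 * a ^ 3)) atTop
      (𝓝 (π / 2 / (2 * a ^ 3))) :=
    ((tendsto_nhds_of_tendsto_nhdsWithin tendsto_arctan_atTop).comp
      (tendsto_id.atTop_div_const ha)).div_const _
  convert hrat.add harctan using 2
  ring

theorem integrableOn_one_div_sq_add_sq_sq {a : ℝ} (ha : 0 < a) :
    IntegrableOn (fun x : ℝ => 1 / (x ^ 2 + a ^ 2) ^ 2) (Ioi 0) :=
  integrableOn_Ioi_deriv_of_nonneg' (fun x _ => hasDerivAt_primitive_one_div_sq_add_sq_sq ha.ne' x)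
    (fun x _ => by positivity) (tendsto_primitive_one_div_sq_add_sq_sq ha)

theorem integral_Ioi_one_div_sq_add_sq_sq {a : ℝ} (ha : 0 < a) :
    ∫ x in Ioi (0 : ℝ), 1 / (x ^ 2 + a ^ 2) ^ 2 = π / (4 * a ^ 3) := by
  rw [integral_Ioi_of_hasDerivAt_of_nonneg'
    (fun x _ => hasDerivAt_primitive_one_div_sq_add_sq_sq ha.ne' x)
    (fun x _ => by positivity) (tendsto_primitive_one_div_sq_add_sq_sq ha)]
  simp

theorem antitoneOn_one_div_sq_add_sq_sq {a : ℝ} (ha : a ≠ 0) :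
    AntitoneOn (fun x : ℝ => 1 / (x ^ 2 + a ^ 2) ^ 2) (Ici 0) := by
  intro x hx y hy hxy
  have : x ^ 2 ≤ y ^ 2 := pow_le_pow_left₀ hx hxy 2
  have : 0 < x ^ 2 + a ^ 2 := by positivity
  dsimp only
  gcongr

theorem tsum_one_div_sq_add_sq_sq_mem_Icc {a : ℝ} (ha : 0 < a) :
    ∑' n : ℕ, 1 / ((n : ℝ) ^ 2 + a ^ 2) ^ 2 ∈
      Icc (π / (4 * a ^ 3)) (1 / a ^ 4 + π / (4 * a ^ 3)) := by
  have anti := antitoneOn_one_div_sq_add_sq_sq ha.ne'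
  have integrable := integrableOn_one_div_sq_add_sq_sq ha
  have nonneg : ∀ x ∈ Ioi (0 : ℝ), 0 ≤ 1 / (x ^ 2 + a ^ 2) ^ 2 := fun x _ => by positivity
  rw [← integral_Ioi_one_div_sq_add_sq_sq ha]
  constructor
  · exact anti.integral_le_tsum (anti.summable_of_integrableOn_Ioi_zero integrable nonneg) nonneg
  · refine (anti.tsum_le_integral integrable nonneg).trans_eq ?_
    ring

theorem stmt_5 (ε γ ω : ℝ) (hε : 0 < ε) (hγ : 0 < γ) (hω : 0 < ω) :
    ∃ C m₀ : ℝ, 0 < C ∧ 0 < m₀ ∧ ∀ m : ℝ, 0 < m → m < m₀ →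
      |(ε ^ 2 / (2 * m ^ 2 * ω ^ 4)) * (∑' n : ℕ, 1 / ((n : ℝ) ^ 2 + γ ^ 2 / (4 * m ^ 2 * ω ^ 2)) ^ 2)
        - m * Real.pi * ε ^ 2 / (γ ^ 3 * ω)| ≤ C * m ^ 2 := by
  refine ⟨8 * ε ^ 2 / γ ^ 4, 1, by positivity, one_pos, fun m hm _ => ?_⟩
  set a := γ / (2 * m * ω)
  have ha : 0 < a := by positivity
  have hsq : γ ^ 2 / (4 * m ^ 2 * ω ^ 2) = a ^ 2 := by rw [div_pow]; ring
  have hT := tsum_one_div_sq_add_sq_sq_mem_Icc ha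
  rw [hsq]
  set K := ε ^ 2 / (2 * m ^ 2 * ω ^ 4)
  have hmain : m * π * ε ^ 2 / (γ ^ 3 * ω) = K * (π / (4 * a ^ 3)) := by
    simp only [K, a]; field_simp; ring
  have herr : 8 * ε ^ 2 / γ ^ 4 * m ^ 2 = K * (1 / a ^ 4) := by
    simp only [K, a]; field_simp; ring
  rw [hmain, herr, ← mul_sub, abs_of_nonneg (mul_nonneg (by positivity) (sub_nonneg.2 hT.1))]
  gcongr
  linarith [hT.2]
end

section
/- As m → 0⁺, the lower-bound series satisfies (ε²/(2m²ω⁴)) ∑_{n=1}^∞ 1/(n² + γ²/(4m²ω²))² = (mπε²)/(γ³ω) + O(m²), since dropping the n = 0 term changes the sum by (ε²/(2m²ω⁴))·(16m⁴ω⁴/γ⁴) = O(m²). -/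
/-! With `a = γ / (2 m ω)` the series is `∑_{n ≥ 1} f n` for the decreasing function
`f x = 1 / (x² + a²)²`, whose integral over `(0, ∞)` is `π / (4 a³)`. The integral test squeezes
the series between `∫₀^∞ f - f 0` and `∫₀^∞ f`; after multiplying by `ε² / (2 m² ω⁴)` the integral
becomes the main term `m π ε² / (γ³ ω)` and `f 0 = 1 / a⁴` becomes the error `8 ε² m² / γ⁴`. -/

open Set MeasureTheory Filter Real Topology

section InvSqAddSqSq

variable {a : ℝ}

theorem hasDerivAt_inv_sq_add_sq_sq_antideriv (ha : 0 < a) (x : ℝ) :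
    HasDerivAt (fun x => x / (2 * a ^ 2 * (x ^ 2 + a ^ 2)) + arctan (x / a) / (2 * a ^ 3))
      (1 / (x ^ 2 + a ^ 2) ^ 2) x := by
  have hrat : HasDerivAt (fun x => x / (2 * a ^ 2 * (x ^ 2 + a ^ 2)))
      ((1 * (2 * a ^ 2 * (x ^ 2 + a ^ 2)) - x * (2 * a ^ 2 * (2 * x))) /
        (2 * a ^ 2 * (x ^ 2 + a ^ 2)) ^ 2) x := by
    have hden : HasDerivAt (fun x => 2 * a ^ 2 * (x ^ 2 + a ^ 2)) (2 * a ^ 2 * (2 * x)) x := by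
      simpa using ((hasDerivAt_pow 2 x).add_const (a ^ 2)).const_mul (2 * a ^ 2)
    exact (hasDerivAt_id' x).div hden (by positivity)
  have harctan : HasDerivAt (fun x => arctan (x / a) / (2 * a ^ 3))
      (1 / (1 + (x / a) ^ 2) * (1 / a) / (2 * a ^ 3)) x := by
    simpa using ((hasDerivAt_arctan (x / a)).comp x ((hasDerivAt_id x).div_const a)).div_const
      (2 * a ^ 3)
  refine (hrat.add harctan).congr_deriv ?_
  field_simp
  ring

theorem tendsto_inv_sq_add_sq_sq_antideriv_atTop (ha : 0 < a) :
    Tendsto (fun x => x / (2 * a ^ 2 * (x ^ 2 + a ^ 2)) + arctan (x / a) / (2 * a ^ 3))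
      atTop (𝓝 (π / (4 * a ^ 3))) := by
  have hrat : Tendsto (fun x => x / (2 * a ^ 2 * (x ^ 2 + a ^ 2))) atTop (𝓝 0) := by
    have hbound : Tendsto (fun x : ℝ => (2 * a ^ 2)⁻¹ * x⁻¹) atTop (𝓝 0) := by
      simpa only [mul_zero] using (tendsto_inv_atTop_zero (𝕜 := ℝ)).const_mul (2 * a ^ 2)⁻¹
    refine squeeze_zero' ?_ ?_ hbound
    · filter_upwards [eventually_ge_atTop 0] with x hx
      positivity
    · filter_upwards [eventually_gt_atTop 0] with x hx
      calc x / (2 * a ^ 2 * (x ^ 2 + a ^ 2)) ≤ x / (2 * a ^ 2 * x ^ 2) := by gcongr; nlinarith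
        _ = (2 * a ^ 2)⁻¹ * x⁻¹ := by field_simp
  have harctan : Tendsto (fun x => arctan (x / a) / (2 * a ^ 3)) atTop
      (𝓝 (π / 2 / (2 * a ^ 3))) :=
    ((tendsto_arctan_atTop.mono_right nhdsWithin_le_nhds).comp
      (tendsto_id.atTop_div_const ha)).div_const _
  convert hrat.add harctan using 2
  ring

theorem integrableOn_inv_sq_add_sq_sq (ha : 0 < a) :
    IntegrableOn (fun x : ℝ => 1 / (x ^ 2 + a ^ 2) ^ 2) (Ioi 0) :=
  integrableOn_Ioi_deriv_of_nonneg' (fun x _ => hasDerivAt_inv_sq_add_sq_sq_antideriv ha x)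
    (fun x _ => by positivity) (tendsto_inv_sq_add_sq_sq_antideriv_atTop ha)

theorem integral_Ioi_inv_sq_add_sq_sq (ha : 0 < a) :
    ∫ x in Ioi 0, 1 / (x ^ 2 + a ^ 2) ^ 2 = π / (4 * a ^ 3) := by
  simpa using integral_Ioi_of_hasDerivAt_of_nonneg' (a := 0)
    (fun x _ => hasDerivAt_inv_sq_add_sq_sq_antideriv ha x) (fun x _ => by positivity)
    (tendsto_inv_sq_add_sq_sq_antideriv_atTop ha)

theorem antitoneOn_inv_sq_add_sq_sq (ha : 0 < a) :
    AntitoneOn (fun x : ℝ => 1 / (x ^ 2 + a ^ 2) ^ 2) (Ici 0) := by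
  intro x hx y _ hxy
  have : 0 ≤ x := hx
  dsimp only
  gcongr

theorem tsum_inv_succ_sq_add_sq_sq_mem_Icc (ha : 0 < a) :
    ∑' n : ℕ, 1 / (((n : ℝ) + 1) ^ 2 + a ^ 2) ^ 2 ∈
      Icc (π / (4 * a ^ 3) - 1 / a ^ 4) (π / (4 * a ^ 3)) := by
  set f : ℝ → ℝ := fun x => 1 / (x ^ 2 + a ^ 2) ^ 2
  have hanti := antitoneOn_inv_sq_add_sq_sq ha
  have hint := integrableOn_inv_sq_add_sq_sq ha
  have hnonneg : ∀ x ∈ Ioi (0 : ℝ), 0 ≤ f x := fun x _ => by positivity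
  have hsum := hanti.summable_of_integrableOn_Ioi_zero hint hnonneg
  have hshift : ∑' n : ℕ, 1 / (((n : ℝ) + 1) ^ 2 + a ^ 2) ^ 2 = ∑' n : ℕ, f (n + 1 : ℕ) := by
    simp [f]
  have hsplit : ∑' n : ℕ, f n = 1 / a ^ 4 + ∑' n : ℕ, f (n + 1 : ℕ) := by
    rw [hsum.tsum_eq_zero_add]
    simp [f, ← pow_mul]
  have hlower := hanti.integral_le_tsum hsum hnonneg
  have hupper := hanti.tsum_add_one_le_integral hint hnonneg
  rw [integral_Ioi_inv_sq_add_sq_sq ha] at hlower hupper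
  rw [hshift]
  constructor <;> linarith

end InvSqAddSqSq

theorem stmt_6 (ε γ ω : ℝ) (hε : 0 < ε) (hγ : 0 < γ) (hω : 0 < ω) :
    ∃ C m₀ : ℝ, 0 < C ∧ 0 < m₀ ∧ ∀ m : ℝ, 0 < m → m < m₀ →
      |(ε ^ 2 / (2 * m ^ 2 * ω ^ 4)) *
          (∑' n : ℕ, 1 / (((n : ℝ) + 1) ^ 2 + γ ^ 2 / (4 * m ^ 2 * ω ^ 2)) ^ 2)
        - m * Real.pi * ε ^ 2 / (γ ^ 3 * ω)| ≤ C * m ^ 2 := by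
  refine ⟨8 * ε ^ 2 / γ ^ 4, 1, by positivity, one_pos, fun m hm _ => ?_⟩
  set a := γ / (2 * m * ω)
  have ha : 0 < a := by positivity
  have hsq : γ ^ 2 / (4 * m ^ 2 * ω ^ 2) = a ^ 2 := by unfold a; field_simp; ring
  obtain ⟨hlower, hupper⟩ := tsum_inv_succ_sq_add_sq_sq_mem_Icc ha
  rw [hsq]
  set c := ε ^ 2 / (2 * m ^ 2 * ω ^ 4)
  have hmain : c * (π / (4 * a ^ 3)) = m * π * ε ^ 2 / (γ ^ 3 * ω) := by
    unfold c a; field_simp; ring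
  have herror : c * (1 / a ^ 4) = 8 * ε ^ 2 / γ ^ 4 * m ^ 2 := by
    unfold c a; field_simp; ring
  calc |c * ∑' n : ℕ, 1 / (((n : ℝ) + 1) ^ 2 + a ^ 2) ^ 2 - m * π * ε ^ 2 / (γ ^ 3 * ω)|
      = c * |∑' n : ℕ, 1 / (((n : ℝ) + 1) ^ 2 + a ^ 2) ^ 2 - π / (4 * a ^ 3)| := by
        rw [← hmain, ← mul_sub, abs_mul, abs_of_pos (by positivity)]
    _ ≤ c * (1 / a ^ 4) := by gcongr; exact abs_sub_le_iff.2 ⟨by linarith, by linarith⟩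
    _ = 8 * ε ^ 2 / γ ^ 4 * m ^ 2 := herror
end

section
/- (Squeeze conclusion) For ε, γ, ω > 0 fixed and S(m) = 2 ∑_{n=0}^∞ c_n(m) c_{n+1}(m) with c_n(m) = (ε/(2m)) / (n²ω² + γ²/(4m²)), one has S(m) = (mπε²)/(γ³ω) + O(m²) as m → 0⁺; in particular S(m)/m → πε²/(γ³ω). -/
/-!
With `a = γ / (2 m ω)` one has `c_n(m) = (ε / (2 m ω²)) / (n² + a²)`, so
`S(m) = 2 (ε / (2 m ω²))² ∑ 1 / ((n² + a²)((n + 1)² + a²))`. Each term of this series lies between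
`f(n + 1)` and `f(n)` for the decreasing function `f(x) = 1 / (x² + a²)²`, whose integral over
`[0, ∞)` is `π / (4 a³)`; the integral test thus pins the series down to `π / (4 a³)` up to
`f(0) = a⁻⁴`. As `m → 0⁺` we have `a → ∞`, and the error term is `O(m²)`.
-/

open Real Filter Topology Set

section IntegralTest

variable {f F : ℝ → ℝ} {L : ℝ}

theorem sub_mem_Icc_of_hasDerivAt_of_antitoneOn (hf : AntitoneOn f (Ici 0))
    (hF : ∀ x, 0 ≤ x → HasDerivAt F (f x) x) (n : ℕ) :
    F (n + 1) - F n ∈ Icc (f (n + 1)) (f n) := by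
  have hn : (0 : ℝ) ≤ n := n.cast_nonneg
  obtain ⟨ξ, hξ, hslope⟩ := exists_hasDerivAt_eq_slope F f (lt_add_one (n : ℝ))
    (fun x hx => (hF x (hn.trans hx.1)).continuousAt.continuousWithinAt)
    (fun x hx => hF x (hn.trans hx.1.le))
  rw [add_sub_cancel_left, div_one] at hslope
  rw [← hslope]
  exact ⟨hf (hn.trans hξ.1.le) (by simp; linarith) hξ.2.le,
    hf hn (hn.trans hξ.1.le) hξ.1.le⟩

theorem summable_and_tsum_mem_Icc_of_hasDerivAt_of_antitoneOn (hf : AntitoneOn f (Ici 0))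
    (hf₀ : ∀ x, 0 ≤ x → 0 ≤ f x) (hF : ∀ x, 0 ≤ x → HasDerivAt F (f x) x)
    (hlim : Tendsto F atTop (𝓝 L)) :
    Summable (fun n : ℕ => f n) ∧ ∑' n : ℕ, f n ∈ Icc (L - F 0) (L - F 0 + f 0) := by
  have hstep := sub_mem_Icc_of_hasDerivAt_of_antitoneOn hf hF
  have htel : ∀ N : ℕ, ∑ n ∈ Finset.range N, (F (n + 1) - F n) = F N - F 0 := fun N => by
    simpa using Finset.sum_range_sub (fun n : ℕ => F n) N
  have hlimℕ := hlim.comp tendsto_natCast_atTop_atTop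
  have hmono : Monotone (fun n : ℕ => F n) := monotone_nat_of_le_succ fun n => by
    have := hf₀ (n + 1) (by positivity)
    push_cast
    linarith [(hstep n).1]
  have hshift : ∀ N : ℕ, ∑ n ∈ Finset.range N, f ↑(n + 1) ≤ L - F 0 := fun N => calc
    ∑ n ∈ Finset.range N, f ↑(n + 1) ≤ ∑ n ∈ Finset.range N, (F (n + 1) - F n) :=
      Finset.sum_le_sum fun n _ => by push_cast; exact (hstep n).1
    _ = F N - F 0 := htel N
    _ ≤ L - F 0 := by linarith [hmono.ge_of_tendsto hlimℕ N]
  have hsum : Summable (fun n : ℕ => f n) :=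
    (summable_nat_add_iff 1).1 (summable_of_sum_range_le (fun n => hf₀ _ (by positivity)) hshift)
  refine ⟨hsum, le_of_tendsto' (hlimℕ.sub_const (F 0)) fun N => ?_, ?_⟩
  · calc F N - F 0 = ∑ n ∈ Finset.range N, (F (n + 1) - F n) := (htel N).symm
      _ ≤ ∑ n ∈ Finset.range N, f n := Finset.sum_le_sum fun n _ => (hstep n).2
      _ ≤ ∑' n : ℕ, f n := hsum.sum_le_tsum _ fun n _ => hf₀ n n.cast_nonneg
  · rw [hsum.tsum_eq_zero_add, Nat.cast_zero, add_comm (f 0)]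
    exact add_le_add_left (tsum_le_of_sum_range_le (fun n => hf₀ _ (by positivity)) hshift) _

end IntegralTest

theorem summable_and_tsum_mem_Icc_of_succ_le_of_le {f g : ℕ → ℝ} (hf : Summable f)
    (hf₀ : ∀ n, 0 ≤ f n) (hfg : ∀ n, f (n + 1) ≤ g n) (hgf : ∀ n, g n ≤ f n) :
    Summable g ∧ ∑' n, g n ∈ Icc (∑' n, f n - f 0) (∑' n, f n) := by
  have hg : Summable g := hf.of_nonneg_of_le (fun n => (hf₀ _).trans (hfg n)) hgf
  refine ⟨hg, ?_, hg.tsum_le_tsum hgf hf⟩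
  rw [hf.tsum_eq_zero_add, add_sub_cancel_left]
  exact ((summable_nat_add_iff 1).2 hf).tsum_le_tsum hfg hg

noncomputable def primitiveInvSqAddSqSq (a x : ℝ) : ℝ :=
  x / (2 * a ^ 2 * (x ^ 2 + a ^ 2)) + arctan (x / a) / (2 * a ^ 3)

section InvSqAddSqSq

variable {a : ℝ}

theorem hasDerivAt_primitiveInvSqAddSqSq (ha : 0 < a) (x : ℝ) :
    HasDerivAt (primitiveInvSqAddSqSq a) ((x ^ 2 + a ^ 2) ^ 2)⁻¹ x := by
  have hx : 0 < x ^ 2 + a ^ 2 := by positivity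
  have hrat : HasDerivAt (fun x => x / (2 * a ^ 2 * (x ^ 2 + a ^ 2)))
      ((1 * (2 * a ^ 2 * (x ^ 2 + a ^ 2)) - x * (2 * a ^ 2 * (2 * x))) /
        (2 * a ^ 2 * (x ^ 2 + a ^ 2)) ^ 2) x :=
    (hasDerivAt_id x).div (by simpa using
      (((hasDerivAt_id x).pow 2).add_const (a ^ 2)).const_mul (2 * a ^ 2)) (by positivity)
  have harctan : HasDerivAt (fun x => arctan (x / a) / (2 * a ^ 3))
      (1 / (1 + (x / a) ^ 2) * (1 / a) / (2 * a ^ 3)) x :=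
    ((hasDerivAt_arctan (x / a)).comp x ((hasDerivAt_id x).div_const a)).div_const _
  refine (hrat.add harctan).congr_deriv ?_
  field_simp
  ring

theorem tendsto_primitiveInvSqAddSqSq_atTop (ha : 0 < a) :
    Tendsto (primitiveInvSqAddSqSq a) atTop (𝓝 (π / (4 * a ^ 3))) := by
  have hrat : Tendsto (fun x : ℝ => x / (2 * a ^ 2 * (x ^ 2 + a ^ 2))) atTop (𝓝 0) := by
    have hinv : Tendsto (fun x : ℝ => (2 * a ^ 2)⁻¹ * x⁻¹) atTop (𝓝 0) := by
      convert tendsto_inv_atTop_zero.const_mul (2 * a ^ 2)⁻¹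
      simp
    refine tendsto_of_tendsto_of_tendsto_of_le_of_le' tendsto_const_nhds hinv ?_ ?_
    · filter_upwards [eventually_ge_atTop 0] with x hx using by positivity
    · filter_upwards [eventually_gt_atTop 0] with x hx
      rw [div_le_iff₀ (by positivity)]
      field_simp
      nlinarith
  have harctan : Tendsto (fun x : ℝ => arctan (x / a) / (2 * a ^ 3)) atTop
      (𝓝 (π / 2 / (2 * a ^ 3))) :=
    ((tendsto_arctan_atTop.mono_right nhdsWithin_le_nhds).comp
      (tendsto_id.atTop_div_const ha)).div_const _
  have := hrat.add harctan
  rwa [zero_add, div_div, ← mul_assoc, show (2 : ℝ) * 2 = 4 by norm_num] at this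

theorem summable_and_tsum_inv_sq_add_sq_sq_mem_Icc (ha : 0 < a) :
    Summable (fun n : ℕ => (((n : ℝ) ^ 2 + a ^ 2) ^ 2)⁻¹) ∧
      ∑' n : ℕ, (((n : ℝ) ^ 2 + a ^ 2) ^ 2)⁻¹ ∈ Icc (π / (4 * a ^ 3)) (π / (4 * a ^ 3) + (a ^ 4)⁻¹) := by
  have hanti : AntitoneOn (fun x : ℝ => ((x ^ 2 + a ^ 2) ^ 2)⁻¹) (Ici 0) := fun x hx y _ hxy => by
    have : x ^ 2 ≤ y ^ 2 := pow_le_pow_left₀ hx hxy 2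
    dsimp only
    gcongr
  have := summable_and_tsum_mem_Icc_of_hasDerivAt_of_antitoneOn hanti (fun x _ => by positivity)
    (fun x _ => hasDerivAt_primitiveInvSqAddSqSq ha x) (tendsto_primitiveInvSqAddSqSq_atTop ha)
  simpa [primitiveInvSqAddSqSq, ← pow_mul] using this

end InvSqAddSqSq

theorem abs_tsum_inv_mul_sub_le {a : ℝ} (ha : 0 < a) :
    |∑' n : ℕ, (((n : ℝ) ^ 2 + a ^ 2) * (((n : ℝ) + 1) ^ 2 + a ^ 2))⁻¹ - π / (4 * a ^ 3)| ≤
      (a ^ 4)⁻¹ := by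
  obtain ⟨hf, hlo, hhi⟩ := summable_and_tsum_inv_sq_add_sq_sq_mem_Icc ha
  obtain ⟨-, hglo, hghi⟩ := summable_and_tsum_mem_Icc_of_succ_le_of_le
    (g := fun n : ℕ => (((n : ℝ) ^ 2 + a ^ 2) * (((n : ℝ) + 1) ^ 2 + a ^ 2))⁻¹) hf
    (fun n => by positivity)
    (fun n => by push_cast; rw [sq (_ + a ^ 2)]; gcongr; linarith)
    (fun n => by rw [sq (_ + a ^ 2)]; gcongr; linarith)
  simp only [Nat.cast_zero, zero_pow two_ne_zero, zero_add, ← pow_mul] at hglo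
  rw [abs_le]
  constructor <;> linarith

theorem abs_two_mul_tsum_sub_le {ε γ ω m : ℝ} (hγ : 0 < γ) (hω : 0 < ω) (hm : 0 < m)
    (c : ℕ → ℝ) (hc : ∀ n, c n = (ε / (2 * m)) / ((n : ℝ) ^ 2 * ω ^ 2 + γ ^ 2 / (4 * m ^ 2))) :
    |2 * ∑' n, c n * c (n + 1) - m * (π * ε ^ 2 / (γ ^ 3 * ω))| ≤ 8 * ε ^ 2 / γ ^ 4 * m ^ 2 := by
  set a := γ / (2 * m * ω) with ha_def
  have ha : 0 < a := by positivity
  have hprod : ∀ n : ℕ, c n * c (n + 1) =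
      (ε / (2 * m * ω ^ 2)) ^ 2 * (((n : ℝ) ^ 2 + a ^ 2) * (((n : ℝ) + 1) ^ 2 + a ^ 2))⁻¹ := by
    intro n
    rw [hc, hc, ha_def]
    push_cast
    field_simp
    ring
  rw [tsum_congr hprod, tsum_mul_left]
  calc _ = 2 * (ε / (2 * m * ω ^ 2)) ^ 2 * |∑' n : ℕ,
        (((n : ℝ) ^ 2 + a ^ 2) * (((n : ℝ) + 1) ^ 2 + a ^ 2))⁻¹ - π / (4 * a ^ 3)| := by
        rw [← abs_of_nonneg (by positivity : 0 ≤ 2 * (ε / (2 * m * ω ^ 2)) ^ 2), ← abs_mul]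
        congr 1
        rw [ha_def]
        field_simp
        ring
    _ ≤ 2 * (ε / (2 * m * ω ^ 2)) ^ 2 * (a ^ 4)⁻¹ := by gcongr; exact abs_tsum_inv_mul_sub_le ha
    _ = 8 * ε ^ 2 / γ ^ 4 * m ^ 2 := by rw [ha_def]; field_simp; ring

theorem tendsto_div_nhdsGT_zero_of_abs_sub_mul_le {S : ℝ → ℝ} {L C : ℝ}
    (h : ∀ m, 0 < m → |S m - m * L| ≤ C * m ^ 2) :
    Tendsto (fun m => S m / m) (𝓝[>] 0) (𝓝 L) := by
  rw [← tendsto_sub_nhds_zero_iff]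
  refine squeeze_zero_norm' ?_ (tendsto_nhdsWithin_of_tendsto_nhds
    ((continuous_const_mul C).tendsto' 0 0 (mul_zero C)))
  filter_upwards [self_mem_nhdsWithin] with m (hm : 0 < m)
  rw [norm_eq_abs, show S m / m - L = (S m - m * L) / m by field_simp, abs_div, abs_of_pos hm,
    div_le_iff₀ hm]
  calc |S m - m * L| ≤ C * m ^ 2 := h m hm
    _ = C * m * m := by ring

theorem stmt_7 (ε γ ω : ℝ) (hε : 0 < ε) (hγ : 0 < γ) (hω : 0 < ω)
    (c : ℝ → ℕ → ℝ)
    (hc : ∀ m n, c m n = (ε / (2 * m)) / ((n : ℝ) ^ 2 * ω ^ 2 + γ ^ 2 / (4 * m ^ 2)))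
    (S : ℝ → ℝ) (hS : ∀ m, S m = 2 * ∑' n : ℕ, c m n * c m (n + 1)) :
    (∃ C m₀ : ℝ, 0 < C ∧ 0 < m₀ ∧ ∀ m : ℝ, 0 < m → m < m₀ →
        |S m - m * Real.pi * ε ^ 2 / (γ ^ 3 * ω)| ≤ C * m ^ 2) ∧
      Filter.Tendsto (fun m => S m / m) (nhdsWithin 0 (Set.Ioi 0))
        (nhds (Real.pi * ε ^ 2 / (γ ^ 3 * ω))) := by
  have hbound (m : ℝ) (hm : 0 < m) :
      |S m - m * (π * ε ^ 2 / (γ ^ 3 * ω))| ≤ 8 * ε ^ 2 / γ ^ 4 * m ^ 2 :=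
    hS m ▸ abs_two_mul_tsum_sub_le hγ hω hm (c m) (hc m)
  refine ⟨⟨8 * ε ^ 2 / γ ^ 4, 1, by positivity, one_pos, fun m hm _ => ?_⟩,
    tendsto_div_nhdsGT_zero_of_abs_sub_mul_le hbound⟩
  rw [show m * π * ε ^ 2 / (γ ^ 3 * ω) = m * (π * ε ^ 2 / (γ ^ 3 * ω)) by ring]
  exact hbound m hm
end
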